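/- arXiv:2106.14768 — 3 statements merged into one kernel-verified Lean document; each statement's English description precedes it below -/
import Mathlib

section
/- For all nonzero ξ₁, ξ₂ ∈ ℝ³ and every z ∈ ℂ⁴, one has |Π(ξ₁) Π(−ξ₂) z| ≲ |z| · ∠(ξ₁, ξ₂), where ∠(ξ₁, ξ₂) denotes the angle between ξ₁ and ξ₂ and the implicit constant is absolute. -/
/-!
Write `S(v) = ∑ⱼ vⱼ αʲ`, so that `Π(ξ) = (1 + S(ξ/|ξ|)) / 2`. The Dirac matrices are
Hermitian and satisfy the Clifford relations `αⁱαʲ + αʲαⁱ = 2δᵢⱼ`, hence `S(v)` is Hermitian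
with `S(v)² = |v|²`, so `‖S(v)‖ = |v|`. In particular `Π(ξ₂) Π(-ξ₂) = (1 - S(ξ₂/|ξ₂|)²) / 4 = 0`,
and therefore `Π(ξ₁) Π(-ξ₂) = (Π(ξ₁) - Π(ξ₂)) Π(-ξ₂) = ½ S(ξ₁/|ξ₁| - ξ₂/|ξ₂|) Π(-ξ₂)`.
Since `‖Π(-ξ₂)‖ ≤ 1` and the chord `|ξ₁/|ξ₁| - ξ₂/|ξ₂||` is at most the angle, the bound holds
with constant `1/2`.
-/

open Matrix Complex

/-- The Pauli matrices σ¹, σ², σ³. -/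
noncomputable def pauli : Fin 3 → Matrix (Fin 2) (Fin 2) ℂ
  | 0 => !![0, 1; 1, 0]
  | 1 => !![0, -Complex.I; Complex.I, 0]
  | 2 => !![1, 0; 0, -1]

/-- The 4×4 Dirac matrices α^j = [[0, σ^j],[σ^j, 0]]. -/
noncomputable def dirac (j : Fin 3) : Matrix (Fin 2 ⊕ Fin 2) (Fin 2 ⊕ Fin 2) ℂ :=
  Matrix.fromBlocks 0 (pauli j) (pauli j) 0

/-- Π(ξ) = (1/2)(I + ξ_j α^j / |ξ|). -/
noncomputable def diracProj (ξ : EuclideanSpace ℝ (Fin 3)) :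
    Matrix (Fin 2 ⊕ Fin 2) (Fin 2 ⊕ Fin 2) ℂ :=
  (1 / 2 : ℂ) • (1 + ‖ξ‖⁻¹ • ∑ j, (ξ j : ℂ) • dirac j)

open scoped Matrix.Norms.L2Operator
open InnerProductGeometry

theorem norm_sub_le_angle_of_norm_eq_one {V : Type*} [NormedAddCommGroup V]
    [InnerProductSpace ℝ V] {x y : V} (hx : ‖x‖ = 1) (hy : ‖y‖ = 1) :
    ‖x - y‖ ≤ angle x y := by
  have hcos := norm_sub_sq_eq_norm_sq_add_norm_sq_sub_two_mul_norm_mul_norm_mul_cos_angle x y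
  rw [hx, hy] at hcos
  -- ‖x - y‖² = 2 - 2 cos θ ≤ θ²: the chord is no longer than the arc.
  have hsq : ‖x - y‖ ^ 2 ≤ angle x y ^ 2 := by
    nlinarith [Real.one_sub_sq_div_two_le_cos (x := angle x y)]
  exact (pow_le_pow_iff_left₀ (norm_nonneg _) (angle_nonneg x y) two_ne_zero).mp hsq

theorem norm_normalize_sub_normalize_le_angle {V : Type*} [NormedAddCommGroup V]
    [InnerProductSpace ℝ V] {x y : V} (hx : x ≠ 0) (hy : y ≠ 0) :
    ‖NormedSpace.normalize x - NormedSpace.normalize y‖ ≤ angle x y := by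
  simpa using norm_sub_le_angle_of_norm_eq_one (NormedSpace.norm_normalize_eq_one_iff.mpr hx)
    (NormedSpace.norm_normalize_eq_one_iff.mpr hy)

theorem sum_smul_mul_self_of_anticomm {K A ι : Type*} [Field K] [CharZero K] [Ring A]
    [Algebra K A] [Fintype ι] [DecidableEq ι] (e : ι → A)
    (he : ∀ i j, e i * e j + e j * e i = if i = j then 2 else 0) (c : ι → K) :
    (∑ i, c i • e i) * (∑ i, c i • e i) = (∑ i, c i ^ 2) • (1 : A) := by
  -- Adding the double sum to itself with the indices swapped produces the anticommutators.
  apply smul_right_injective A (two_ne_zero : (2 : K) ≠ 0)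
  have hswap : (∑ i, c i • e i) * (∑ i, c i • e i)
      = ∑ i, ∑ j, (c i * c j) • (e j * e i) := by
    rw [Finset.sum_mul_sum, Finset.sum_comm]
    simp only [smul_mul_smul_comm, mul_comm]
  calc (2 : K) • ((∑ i, c i • e i) * (∑ i, c i • e i))
      = ∑ i, ∑ j, (c i * c j) • (e i * e j + e j * e i) := by
        rw [two_smul]
        nth_rewrite 2 [hswap]
        simp only [Finset.sum_mul_sum, smul_mul_smul_comm, smul_add, Finset.sum_add_distrib]
    _ = ∑ i, (c i ^ 2 * 2) • (1 : A) := by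
        simp only [he, smul_ite, smul_zero, Finset.sum_ite_eq, Finset.mem_univ, if_true]
        simp only [mul_smul, Algebra.smul_def (2 : K), map_ofNat, mul_one, sq]
    _ = (2 : K) • ((∑ i, c i ^ 2) • (1 : A)) := by
        rw [← Finset.sum_smul, smul_smul, ← Finset.sum_mul, mul_comm]

theorem pauli_anticomm (i j : Fin 3) :
    pauli i * pauli j + pauli j * pauli i = if i = j then 2 else 0 := by
  fin_cases i <;> fin_cases j <;> ext a b <;> fin_cases a <;> fin_cases b <;>
    simp [pauli, Matrix.ofNat_apply, one_add_one_eq_two]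

theorem dirac_anticomm (i j : Fin 3) :
    dirac i * dirac j + dirac j * dirac i = if i = j then 2 else 0 := by
  simp only [dirac, fromBlocks_multiply, fromBlocks_add, Matrix.mul_zero, Matrix.zero_mul,
    add_zero, zero_add, pauli_anticomm]
  split_ifs
  · ext (a | a) (b | b) <;> simp [Matrix.ofNat_apply]
  · simp

theorem pauli_conjTranspose (j : Fin 3) : (pauli j)ᴴ = pauli j := by
  fin_cases j <;> ext a b <;> fin_cases a <;> fin_cases b <;> simp [pauli]

theorem dirac_conjTranspose (j : Fin 3) : (dirac j)ᴴ = dirac j := by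
  simp only [dirac, fromBlocks_conjTranspose, conjTranspose_zero, pauli_conjTranspose]

noncomputable def diracSymbol :
    EuclideanSpace ℝ (Fin 3) →ₗ[ℝ] Matrix (Fin 2 ⊕ Fin 2) (Fin 2 ⊕ Fin 2) ℂ where
  toFun v := ∑ j, v j • dirac j
  map_add' v w := by simp [add_smul, Finset.sum_add_distrib]
  map_smul' r v := by simp [Finset.smul_sum, smul_smul]

theorem diracSymbol_apply (v : EuclideanSpace ℝ (Fin 3)) :
    diracSymbol v = ∑ j, v j • dirac j := rfl

theorem diracSymbol_mul_self (v : EuclideanSpace ℝ (Fin 3)) :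
    diracSymbol v * diracSymbol v = (‖v‖ ^ 2) • 1 := by
  rw [diracSymbol_apply, sum_smul_mul_self_of_anticomm _ dirac_anticomm,
    EuclideanSpace.real_norm_sq_eq]

theorem diracSymbol_conjTranspose (v : EuclideanSpace ℝ (Fin 3)) :
    (diracSymbol v)ᴴ = diracSymbol v := by
  simp only [diracSymbol_apply, conjTranspose_sum, conjTranspose_smul, star_trivial,
    dirac_conjTranspose]

theorem l2_opNorm_diracSymbol (v : EuclideanSpace ℝ (Fin 3)) : ‖diracSymbol v‖ = ‖v‖ := by
  have h : ‖diracSymbol v‖ * ‖diracSymbol v‖ = ‖v‖ * ‖v‖ := by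
    rw [← l2_opNorm_conjTranspose_mul_self, diracSymbol_conjTranspose, diracSymbol_mul_self,
      norm_smul, norm_one, mul_one, Real.norm_of_nonneg (by positivity), sq]
  exact (mul_self_inj (norm_nonneg _) (norm_nonneg _)).mp h

theorem diracProj_eq (ξ : EuclideanSpace ℝ (Fin 3)) :
    diracProj ξ = (1 / 2 : ℂ) • (1 + diracSymbol (NormedSpace.normalize ξ)) := by
  simp only [diracProj, diracSymbol_apply, NormedSpace.normalize, map_smul, Finset.smul_sum,
    smul_smul, smul_add, coe_smul]

theorem diracProj_mul_diracProj_neg {ξ : EuclideanSpace ℝ (Fin 3)} (hξ : ξ ≠ 0) :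
    diracProj ξ * diracProj (-ξ) = 0 := by
  rw [diracProj_eq, diracProj_eq, NormedSpace.normalize_neg, map_neg, smul_mul_smul_comm]
  set S := diracSymbol (NormedSpace.normalize ξ)
  have hsq : S * S = 1 := by
    rw [diracSymbol_mul_self, NormedSpace.norm_normalize_eq_one_iff.mpr hξ, one_pow, one_smul]
  have hfactor : (1 + S) * (1 + -S) = 1 - S * S := by noncomm_ring
  rw [hfactor, hsq, sub_self, smul_zero]

theorem l2_opNorm_diracProj_le_one {ξ : EuclideanSpace ℝ (Fin 3)} (hξ : ξ ≠ 0) :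
    ‖diracProj ξ‖ ≤ 1 := by
  rw [diracProj_eq, norm_smul, norm_div, norm_one, Complex.norm_two]
  calc 1 / 2 * ‖1 + diracSymbol (NormedSpace.normalize ξ)‖
      ≤ 1 / 2 * (‖(1 : Matrix (Fin 2 ⊕ Fin 2) (Fin 2 ⊕ Fin 2) ℂ)‖
        + ‖diracSymbol (NormedSpace.normalize ξ)‖) := by gcongr; exact norm_add_le _ _
    _ = 1 := by
        rw [norm_one, l2_opNorm_diracSymbol, NormedSpace.norm_normalize_eq_one_iff.mpr hξ]
        norm_num

theorem l2_opNorm_diracProj_sub_le {ξ₁ ξ₂ : EuclideanSpace ℝ (Fin 3)} (h₁ : ξ₁ ≠ 0)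
    (h₂ : ξ₂ ≠ 0) : ‖diracProj ξ₁ - diracProj ξ₂‖ ≤ angle ξ₁ ξ₂ / 2 := by
  rw [diracProj_eq, diracProj_eq, ← smul_sub, add_sub_add_left_eq_sub, ← map_sub, norm_smul,
    l2_opNorm_diracSymbol, norm_div, norm_one, Complex.norm_two]
  linarith [norm_normalize_sub_normalize_le_angle h₁ h₂]

theorem l2_opNorm_diracProj_mul_diracProj_neg_le {ξ₁ ξ₂ : EuclideanSpace ℝ (Fin 3)}
    (h₁ : ξ₁ ≠ 0) (h₂ : ξ₂ ≠ 0) : ‖diracProj ξ₁ * diracProj (-ξ₂)‖ ≤ angle ξ₁ ξ₂ / 2 := by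
  have hnull : diracProj ξ₁ * diracProj (-ξ₂)
      = (diracProj ξ₁ - diracProj ξ₂) * diracProj (-ξ₂) := by
    rw [sub_mul, diracProj_mul_diracProj_neg h₂, sub_zero]
  calc ‖diracProj ξ₁ * diracProj (-ξ₂)‖
      = ‖(diracProj ξ₁ - diracProj ξ₂) * diracProj (-ξ₂)‖ := by rw [hnull]
    _ ≤ ‖diracProj ξ₁ - diracProj ξ₂‖ * ‖diracProj (-ξ₂)‖ := l2_opNorm_mul _ _
    _ ≤ ‖diracProj ξ₁ - diracProj ξ₂‖ :=
        mul_le_of_le_one_right (norm_nonneg _) (l2_opNorm_diracProj_le_one (neg_ne_zero.mpr h₂))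
    _ ≤ angle ξ₁ ξ₂ / 2 := l2_opNorm_diracProj_sub_le h₁ h₂

/-- |Π(ξ₁) Π(−ξ₂) z| ≲ |z| ∠(ξ₁, ξ₂) for all nonzero ξ₁, ξ₂ ∈ ℝ³ and z ∈ ℂ⁴,
with an absolute implicit constant. -/
theorem diracProj_null_structure :
    ∃ C > (0 : ℝ), ∀ (ξ₁ ξ₂ : EuclideanSpace ℝ (Fin 3)), ξ₁ ≠ 0 → ξ₂ ≠ 0 →
      ∀ z : EuclideanSpace ℂ (Fin 2 ⊕ Fin 2),
        ‖(WithLp.equiv 2 ((Fin 2 ⊕ Fin 2) → ℂ)).symm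
            ((diracProj ξ₁ * diracProj (-ξ₂)).mulVec ((WithLp.equiv 2 _) z))‖
          ≤ C * ‖z‖ * InnerProductGeometry.angle ξ₁ ξ₂ := by
  refine ⟨1 / 2, by norm_num, fun ξ₁ ξ₂ h₁ h₂ z => ?_⟩
  calc _ ≤ ‖diracProj ξ₁ * diracProj (-ξ₂)‖ * ‖z‖ := l2_opNorm_mulVec _ z
    _ ≤ angle ξ₁ ξ₂ / 2 * ‖z‖ := by
        gcongr
        exact l2_opNorm_diracProj_mul_diracProj_neg_le h₁ h₂
    _ = 1 / 2 * ‖z‖ * angle ξ₁ ξ₂ := by ring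
end

section
/- For any nonzero ξ₁, ξ₂ ∈ ℝ³ and real τ₁, τ₂, setting ξ₃ = −(ξ₁+ξ₂) and τ₃ = −(τ₁+τ₂), the angle ∠(±₁ξ₁, ±₂ξ₂) between ±₁ξ₁ and ±₂ξ₂ satisfies, for any b ∈ [0, 1/2]: ∠(±₁ξ₁, ±₂ξ₂) ≲ (⟨−τ₁ ±₁ |ξ₁|⟩ / min(⟨ξ₁⟩, ⟨ξ₂⟩))^{1/2} + (⟨−τ₂ ±₂ |ξ₂|⟩ / min(⟨ξ₁⟩, ⟨ξ₂⟩))^{b} + (⟨|τ₃| − |ξ₃|⟩ / min(⟨ξ₁⟩, ⟨ξ₂⟩))^{1/2}. -/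
/-!
Put `σ = ±₁|ξ₁| ±₂|ξ₂|`, `q = |ξ₁ + ξ₂|` and `θ = ∠(±₁ξ₁, ±₂ξ₂)`. The law of cosines gives
`|σ² - q²| = 2|ξ₁||ξ₂|(1 - cos θ) ≳ |ξ₁||ξ₂|θ²`. On the other hand `σ - (τ₁ + τ₂)` is the sum of
the first two modulations, so `||σ| - q|` is at most the sum `S` of the three modulations, and
`|σ² - q²| ≤ 2S(|ξ₁| + |ξ₂|)`. Hence `θ² min(|ξ₁|, |ξ₂|) ≲ S`, and taking square roots gives the
estimate. The exponent `b ≤ 1/2` of the middle term costs nothing: when the middle ratio is at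
least `1`, the bound `θ ≤ π` suffices.
-/

open InnerProductGeometry

/-- The Japanese bracket ⟨x⟩ = (1 + |x|²)^{1/2} of a real number. -/
noncomputable def jb (x : ℝ) : ℝ := Real.sqrt (1 + x ^ 2)

open Real
open scoped RealInnerProductSpace

lemma one_le_jb (x : ℝ) : 1 ≤ jb x :=
  Real.one_le_sqrt.mpr (by nlinarith [sq_nonneg x])

lemma jb_pos (x : ℝ) : 0 < jb x := one_pos.trans_le (one_le_jb x)

lemma abs_le_jb (x : ℝ) : |x| ≤ jb x :=
  Real.abs_le_sqrt (by linarith)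

lemma jb_le_one_add_abs (x : ℝ) : jb x ≤ 1 + |x| :=
  Real.sqrt_le_iff.mpr ⟨by positivity, by nlinarith [sq_abs x, abs_nonneg x]⟩

section InnerProductSpace

variable {F : Type*} [NormedAddCommGroup F] [InnerProductSpace ℝ F] {e₁ e₂ : ℝ}

lemma sq_add_sub_norm_add_sq (he₁ : |e₁| = 1) (he₂ : |e₂| = 1) (ξ₁ ξ₂ : F) :
    (e₁ * ‖ξ₁‖ + e₂ * ‖ξ₂‖) ^ 2 - ‖ξ₁ + ξ₂‖ ^ 2 =
      e₁ * e₂ * (2 * ‖ξ₁‖ * ‖ξ₂‖ * (1 - cos (angle (e₁ • ξ₁) (e₂ • ξ₂)))) := by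
  have h₁ : e₁ ^ 2 = 1 := by rw [← sq_abs, he₁, one_pow]
  have h₂ : e₂ ^ 2 = 1 := by rw [← sq_abs, he₂, one_pow]
  have hcos := cos_angle_mul_norm_mul_norm (e₁ • ξ₁) (e₂ • ξ₂)
  rw [norm_smul, norm_smul, Real.norm_eq_abs, Real.norm_eq_abs, he₁, he₂,
    real_inner_smul_left, real_inner_smul_right] at hcos
  rw [norm_add_sq_real]
  linear_combination ‖ξ₁‖ ^ 2 * h₁ + ‖ξ₂‖ ^ 2 * h₂ + 2 * e₁ * e₂ * hcos
    + 2 * ⟪ξ₁, ξ₂⟫ * e₁ ^ 2 * h₂ + 2 * ⟪ξ₁, ξ₂⟫ * h₁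

lemma abs_sq_add_sub_norm_add_sq (he₁ : |e₁| = 1) (he₂ : |e₂| = 1) (ξ₁ ξ₂ : F) :
    |(e₁ * ‖ξ₁‖ + e₂ * ‖ξ₂‖) ^ 2 - ‖ξ₁ + ξ₂‖ ^ 2| =
      2 * ‖ξ₁‖ * ‖ξ₂‖ * (1 - cos (angle (e₁ • ξ₁) (e₂ • ξ₂))) := by
  rw [sq_add_sub_norm_add_sq he₁ he₂, abs_mul, abs_mul, he₁, he₂, one_mul, one_mul,
    abs_of_nonneg (by have := cos_le_one (angle (e₁ • ξ₁) (e₂ • ξ₂)); positivity)]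

lemma sq_angle_mul_min_norm_le (he₁ : |e₁| = 1) (he₂ : |e₂| = 1) (ξ₁ ξ₂ : F) (τ₁ τ₂ : ℝ) :
    angle (e₁ • ξ₁) (e₂ • ξ₂) ^ 2 * min ‖ξ₁‖ ‖ξ₂‖ ≤
      π ^ 2 * (|-τ₁ + e₁ * ‖ξ₁‖| + |-τ₂ + e₂ * ‖ξ₂‖| + |(|τ₁ + τ₂| - ‖ξ₁ + ξ₂‖)|) := by
  set θ := angle (e₁ • ξ₁) (e₂ • ξ₂)
  set r := ‖ξ₁‖
  set s := ‖ξ₂‖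
  set σ := e₁ * r + e₂ * s
  set q := ‖ξ₁ + ξ₂‖
  set S := |-τ₁ + e₁ * r| + |-τ₂ + e₂ * s| + |(|τ₁ + τ₂| - q)|
  have hr : 0 ≤ r := norm_nonneg _
  have hs : 0 ≤ s := norm_nonneg _
  have hlower : 2 / π ^ 2 * θ ^ 2 * (2 * r * s) ≤ |σ ^ 2 - q ^ 2| := by
    rw [abs_sq_add_sub_norm_add_sq he₁ he₂]
    have hθ : |θ| ≤ π := by rw [abs_of_nonneg (angle_nonneg _ _)]; exact angle_le_pi _ _
    nlinarith [cos_le_one_sub_mul_cos_sq hθ, mul_nonneg hr hs]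
  have hσ : |σ| ≤ r + s := by
    simpa [abs_mul, he₁, he₂, abs_of_nonneg hr, abs_of_nonneg hs] using abs_add_le (e₁ * r) (e₂ * s)
  have hσq : |(|σ| - q)| ≤ S := by
    have hsplit : σ - (τ₁ + τ₂) = (-τ₁ + e₁ * r) + (-τ₂ + e₂ * s) := by ring
    have := abs_abs_sub_abs_le_abs_sub σ (τ₁ + τ₂)
    rw [hsplit] at this
    linarith [abs_sub_le |σ| |τ₁ + τ₂| q, abs_add_le (-τ₁ + e₁ * r) (-τ₂ + e₂ * s)]
  have hupper : |σ ^ 2 - q ^ 2| ≤ S * (2 * (r + s)) := by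
    rw [← sq_abs σ, sq_sub_sq, abs_mul, abs_of_nonneg (by positivity : 0 ≤ |σ| + q), mul_comm]
    exact mul_le_mul hσq (by linarith [norm_add_le ξ₁ ξ₂]) (by positivity) (by positivity)
  have hmin : min r s * (r + s) ≤ 2 * (r * s) := by
    rcases min_cases r s with ⟨h, hrs⟩ | ⟨h, hrs⟩ <;> rw [h] <;> nlinarith
  have hcombined : θ ^ 2 * min r s * (r + s) ≤ π ^ 2 * S * (r + s) := by
    calc θ ^ 2 * min r s * (r + s) ≤ θ ^ 2 * (2 * (r * s)) := by
          rw [mul_assoc]; exact mul_le_mul_of_nonneg_left hmin (sq_nonneg θ)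
      _ = π ^ 2 / 2 * (2 / π ^ 2 * θ ^ 2 * (2 * r * s)) := by field_simp
      _ ≤ π ^ 2 / 2 * (S * (2 * (r + s))) :=
          mul_le_mul_of_nonneg_left (hlower.trans hupper) (by positivity)
      _ = π ^ 2 * S * (r + s) := by ring
  rcases (add_nonneg hr hs).eq_or_lt with hzero | hpos
  · have : min r s = 0 := le_antisymm (by rw [min_le_iff]; left; linarith) (le_min hr hs)
    rw [this, mul_zero]
    positivity
  · exact le_of_mul_le_mul_right hcombined hpos

lemma sq_angle_mul_min_jb_le (he₁ : |e₁| = 1) (he₂ : |e₂| = 1) (ξ₁ ξ₂ : F) (τ₁ τ₂ : ℝ) :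
    angle (e₁ • ξ₁) (e₂ • ξ₂) ^ 2 * min (jb ‖ξ₁‖) (jb ‖ξ₂‖) ≤
      2 * π ^ 2 * (jb (-τ₁ + e₁ * ‖ξ₁‖) + jb (-τ₂ + e₂ * ‖ξ₂‖) + jb (|τ₁ + τ₂| - ‖ξ₁ + ξ₂‖)) := by
  set θ := angle (e₁ • ξ₁) (e₂ • ξ₂)
  have hθ : θ ^ 2 ≤ π ^ 2 := pow_le_pow_left₀ (angle_nonneg _ _) (angle_le_pi _ _) 2
  have hmin : min (jb ‖ξ₁‖) (jb ‖ξ₂‖) ≤ 1 + min ‖ξ₁‖ ‖ξ₂‖ := by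
    rw [← min_add_add_left]
    exact min_le_min (by simpa using jb_le_one_add_abs ‖ξ₁‖) (by simpa using jb_le_one_add_abs ‖ξ₂‖)
  calc θ ^ 2 * min (jb ‖ξ₁‖) (jb ‖ξ₂‖)
      ≤ θ ^ 2 + θ ^ 2 * min ‖ξ₁‖ ‖ξ₂‖ := by nlinarith [sq_nonneg θ]
    _ ≤ π ^ 2 + π ^ 2 * (|-τ₁ + e₁ * ‖ξ₁‖| + |-τ₂ + e₂ * ‖ξ₂‖| + |(|τ₁ + τ₂| - ‖ξ₁ + ξ₂‖)|) :=
        add_le_add hθ (sq_angle_mul_min_norm_le he₁ he₂ ξ₁ ξ₂ τ₁ τ₂)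
    _ ≤ _ := by
        nlinarith [pi_pos, one_le_jb (-τ₁ + e₁ * ‖ξ₁‖), abs_le_jb (-τ₁ + e₁ * ‖ξ₁‖),
          abs_le_jb (-τ₂ + e₂ * ‖ξ₂‖), abs_le_jb (|τ₁ + τ₂| - ‖ξ₁ + ξ₂‖),
          one_le_jb (-τ₂ + e₂ * ‖ξ₂‖), one_le_jb (|τ₁ + τ₂| - ‖ξ₁ + ξ₂‖)]

end InnerProductSpace

lemma le_mul_rpow_add_rpow_add_rpow {θ K A B D b : ℝ} (hθ : 0 ≤ θ) (hθK : θ ≤ K)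
    (hA : 0 ≤ A) (hB : 0 ≤ B) (hD : 0 ≤ D) (hb₀ : 0 ≤ b) (hb : b ≤ 1 / 2)
    (h : θ ^ 2 ≤ K ^ 2 * (A + B + D)) :
    θ ≤ K * (A ^ ((1 : ℝ) / 2) + B ^ b + D ^ ((1 : ℝ) / 2)) := by
  have hK : 0 ≤ K := hθ.trans hθK
  rcases le_total B 1 with hB₁ | hB₁
  · have hsqrt : θ ≤ K * (A + B + D) ^ ((1 : ℝ) / 2) := by
      rw [← sqrt_eq_rpow, ← sqrt_sq hK, ← sqrt_mul (sq_nonneg K)]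
      exact le_sqrt_of_sq_le h
    have hsub : (A + B + D) ^ ((1 : ℝ) / 2) ≤ A ^ ((1 : ℝ) / 2) + B ^ b + D ^ ((1 : ℝ) / 2) := by
      calc (A + B + D) ^ ((1 : ℝ) / 2)
          ≤ A ^ ((1 : ℝ) / 2) + B ^ ((1 : ℝ) / 2) + D ^ ((1 : ℝ) / 2) := by
            refine (rpow_add_le_add_rpow (by positivity) hD (by norm_num) (by norm_num)).trans ?_
            gcongr
            exact rpow_add_le_add_rpow hA hB (by norm_num) (by norm_num)
        _ ≤ _ := by linarith [rpow_le_rpow_of_exponent_ge' hB hB₁ hb₀ hb]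
    exact hsqrt.trans (mul_le_mul_of_nonneg_left hsub hK)
  · have : 1 ≤ B ^ b := one_le_rpow hB₁ hb₀
    have := rpow_nonneg hA ((1 : ℝ) / 2)
    have := rpow_nonneg hD ((1 : ℝ) / 2)
    nlinarith

/-- The angle estimate: for nonzero ξ₁, ξ₂ ∈ ℝ³, real τ₁, τ₂, ξ₃ = −(ξ₁+ξ₂),
τ₃ = −(τ₁+τ₂), signs ±₁, ±₂ (encoded by e₁, e₂ ∈ {1,−1}) and any b ∈ [0,1/2]:
∠(±₁ξ₁, ±₂ξ₂) ≲ (⟨−τ₁ ±₁ |ξ₁|⟩/min(⟨ξ₁⟩,⟨ξ₂⟩))^{1/2}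
  + (⟨−τ₂ ±₂ |ξ₂|⟩/min(⟨ξ₁⟩,⟨ξ₂⟩))^{b} + (⟨|τ₃| − |ξ₃|⟩/min(⟨ξ₁⟩,⟨ξ₂⟩))^{1/2}. -/
theorem angle_estimate :
    ∃ C > (0 : ℝ), ∀ (e₁ e₂ : ℝ), (e₁ = 1 ∨ e₁ = -1) → (e₂ = 1 ∨ e₂ = -1) →
      ∀ (ξ₁ ξ₂ : EuclideanSpace ℝ (Fin 3)) (τ₁ τ₂ b : ℝ),
        ξ₁ ≠ 0 → ξ₂ ≠ 0 → 0 ≤ b → b ≤ 1 / 2 →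
        angle (e₁ • ξ₁) (e₂ • ξ₂) ≤
          C * ((jb (-τ₁ + e₁ * ‖ξ₁‖) / min (jb ‖ξ₁‖) (jb ‖ξ₂‖)) ^ ((1 : ℝ) / 2)
            + (jb (-τ₂ + e₂ * ‖ξ₂‖) / min (jb ‖ξ₁‖) (jb ‖ξ₂‖)) ^ b
            + (jb (|-(τ₁ + τ₂)| - ‖-(ξ₁ + ξ₂)‖) / min (jb ‖ξ₁‖) (jb ‖ξ₂‖)) ^ ((1 : ℝ) / 2)) := by
  have abs_of_sign : ∀ e : ℝ, e = 1 ∨ e = -1 → |e| = 1 := by rintro e (rfl | rfl) <;> norm_num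
  refine ⟨6, by norm_num, fun e₁ e₂ he₁ he₂ ξ₁ ξ₂ τ₁ τ₂ b _ _ hb₀ hb => ?_⟩
  rw [abs_neg, norm_neg]
  set m := min (jb ‖ξ₁‖) (jb ‖ξ₂‖)
  have hm : 0 < m := lt_min (jb_pos _) (jb_pos _)
  have hkey := sq_angle_mul_min_jb_le (abs_of_sign e₁ he₁) (abs_of_sign e₂ he₂) ξ₁ ξ₂ τ₁ τ₂
  refine le_mul_rpow_add_rpow_add_rpow (angle_nonneg _ _)
    ((angle_le_pi _ _).trans (by linarith [pi_le_four])) (div_pos (jb_pos _) hm).le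
    (div_pos (jb_pos _) hm).le (div_pos (jb_pos _) hm).le hb₀ hb ?_
  rw [← add_div, ← add_div, mul_div_assoc', le_div_iff₀ hm]
  refine hkey.trans (mul_le_mul_of_nonneg_right ?_
    (add_pos (add_pos (jb_pos _) (jb_pos _)) (jb_pos _)).le)
  nlinarith [pi_le_four, pi_pos]
end

section
/- For every l > 1/2 there exists C so that for all T ∈ ℕ and x ∈ ℝ², ∫_{{ξ ∈ ℝ² : ||ξ| − T| ≤ 1}} ⟨x − ξ⟩^{−2l} dξ ≤ C. -/
/-!
A reflection of the plane preserving the annulus `a ≤ ‖ξ‖ ≤ b` moves `x` onto the first coordinate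
axis, after which `⟨x - ξ⟩ ≥ ⟨ξ₂⟩`. Where `|ξ₂| ≤ b / 2`, every horizontal slice of the annulus has
length at most `4 (b² - a²) / b`, so by Tonelli this part contributes at most that times
`∫ ⟨y⟩^{-2l} dy`, which is finite because `2l > 1`. Where `|ξ₂| > b / 2`, the weight is at most
`⟨b / 2⟩^{-2l} ≤ ⟨b / 2⟩^{-1} ≤ 2 / b`, while the annulus has area `π (b² - a²)`. For
`a = T - 1`, `b = T + 1` the ratio `(b² - a²) / b` is at most `4`.
-/

open MeasureTheory Set Real
open scoped ENNReal

theorem setLIntegral_norm_sub_eq_of_norm_eq {E : Type*} [NormedAddCommGroup E]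
    [InnerProductSpace ℝ E] [FiniteDimensional ℝ E] [MeasurableSpace E] [BorelSpace E]
    (s : Set ℝ) (f : ℝ → ℝ≥0∞) {x w : E} (h : ‖x‖ = ‖w‖) :
    ∫⁻ ξ in norm ⁻¹' s, f ‖x - ξ‖ = ∫⁻ ξ in norm ⁻¹' s, f ‖w - ξ‖ := by
  set R := (ℝ ∙ (x - w))ᗮ.reflection
  have hRx : R x = w := Submodule.reflection_sub h
  have hS : R ⁻¹' (norm ⁻¹' s) = norm ⁻¹' s := by ext; simp
  conv_rhs => rw [← R.measurePreserving.setLIntegral_comp_preimage_emb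
    R.toHomeomorph.measurableEmbedding, hS, ← hRx]
  simp_rw [← map_sub, LinearIsometryEquiv.norm_map]

theorem setLIntegral_comp_snd_le_of_measure_slice_le {α β : Type*} [MeasurableSpace α]
    [MeasurableSpace β] {μ : Measure α} {ν : Measure β} [SFinite μ] [SFinite ν]
    {S : Set (α × β)} (hS : MeasurableSet S) {g : β → ℝ≥0∞} (hg : Measurable g) {L : ℝ≥0∞}
    (hL : ∀ y, μ {x | (x, y) ∈ S} ≤ L) :
    ∫⁻ p in S, g p.2 ∂μ.prod ν ≤ L * ∫⁻ y, g y ∂ν := by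
  rw [← lintegral_indicator hS, lintegral_prod_symm' (S.indicator fun p => g p.2)
      ((hg.comp measurable_snd).indicator hS),
    ← lintegral_const_mul _ hg]
  refine lintegral_mono fun y => ?_
  have hslice : MeasurableSet {x | (x, y) ∈ S} := measurable_prodMk_right hS
  calc ∫⁻ x, S.indicator (fun p => g p.2) (x, y) ∂μ
      = ∫⁻ x, {x | (x, y) ∈ S}.indicator (fun _ => g y) x ∂μ := rfl
    _ = g y * μ {x | (x, y) ∈ S} := lintegral_indicator_const hslice _
    _ ≤ L * g y := by rw [mul_comm]; gcongr; exact hL y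

theorem volume_setOf_sq_mem_Icc_le {α β : ℝ} (hαβ : α ≤ β) (hβ : 0 < β) :
    volume {s : ℝ | α ≤ s ^ 2 ∧ s ^ 2 ≤ β} ≤ 2 * ENNReal.ofReal ((β - α) / √β) := by
  set r := √(max α 0)
  set R := √β
  have hR : 0 < R := Real.sqrt_pos.2 hβ
  have hrR : r ≤ R := Real.sqrt_le_sqrt (max_le hαβ hβ.le)
  have hsub : {s : ℝ | α ≤ s ^ 2 ∧ s ^ 2 ≤ β} ⊆ Icc (-R) (-r) ∪ Icc r R := by
    rintro s ⟨hαs, hsβ⟩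
    have hsR : |s| ≤ R := Real.abs_le_sqrt hsβ
    have hrs : r ≤ |s| := by
      rw [← Real.sqrt_sq_eq_abs]; exact Real.sqrt_le_sqrt (max_le hαs (sq_nonneg s))
    rcases le_total 0 s with hs | hs
    · rw [abs_of_nonneg hs] at hsR hrs; exact Or.inr ⟨hrs, hsR⟩
    · rw [abs_of_nonpos hs] at hsR hrs; exact Or.inl ⟨by linarith, by linarith⟩
  have hgap : R - r ≤ (β - α) / R := by
    rw [le_div_iff₀ hR]
    have hR2 : R ^ 2 = β := Real.sq_sqrt hβ.le
    have hr2 : α ≤ r ^ 2 := (Real.sq_sqrt (le_max_right α 0)).symm ▸ le_max_left α 0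
    nlinarith [Real.sqrt_nonneg (max α 0)]
  calc volume {s : ℝ | α ≤ s ^ 2 ∧ s ^ 2 ≤ β}
      ≤ volume (Icc (-R) (-r)) + volume (Icc r R) :=
        (measure_mono hsub).trans (measure_union_le _ _)
    _ = 2 * ENNReal.ofReal (R - r) := by
        rw [Real.volume_Icc, Real.volume_Icc, neg_sub_neg, two_mul]
    _ ≤ 2 * ENNReal.ofReal ((β - α) / R) := by gcongr

theorem volume_annulus_slice_le {a b y : ℝ} (ha : 0 ≤ a) (hab : a ≤ b) (hb : 0 < b)
    (hy : |y| ≤ b / 2) :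
    volume {x : ℝ | a ^ 2 ≤ x ^ 2 + y ^ 2 ∧ x ^ 2 + y ^ 2 ≤ b ^ 2}
      ≤ ENNReal.ofReal (4 * (b ^ 2 - a ^ 2) / b) := by
  have hy2 : y ^ 2 ≤ (b / 2) ^ 2 := by rw [← sq_abs]; gcongr
  have hroot : b / 2 ≤ √(b ^ 2 - y ^ 2) := Real.le_sqrt_of_sq_le (by nlinarith)
  have hset : {x : ℝ | a ^ 2 ≤ x ^ 2 + y ^ 2 ∧ x ^ 2 + y ^ 2 ≤ b ^ 2}
      = {x : ℝ | a ^ 2 - y ^ 2 ≤ x ^ 2 ∧ x ^ 2 ≤ b ^ 2 - y ^ 2} := by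
    ext x; simp only [mem_ofPred_eq]; constructor <;> rintro ⟨h₁, h₂⟩ <;> constructor <;> linarith
  rw [hset]
  calc _ ≤ 2 * ENNReal.ofReal ((b ^ 2 - y ^ 2 - (a ^ 2 - y ^ 2)) / √(b ^ 2 - y ^ 2)) :=
        volume_setOf_sq_mem_Icc_le (by nlinarith) (by nlinarith)
    _ ≤ 2 * ENNReal.ofReal ((b ^ 2 - a ^ 2) / (b / 2)) := by
        rw [sub_sub_sub_cancel_right]
        gcongr
        nlinarith
    _ = ENNReal.ofReal (4 * (b ^ 2 - a ^ 2) / b) := by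
        rw [← ENNReal.ofReal_ofNat 2, ← ENNReal.ofReal_mul zero_le_two]; congr 1; field_simp; ring

theorem volume_annulus_le {a b : ℝ} (ha : 0 ≤ a) (hab : a ≤ b) :
    volume (norm ⁻¹' Icc a b : Set (EuclideanSpace ℝ (Fin 2)))
      ≤ ENNReal.ofReal (π * (b ^ 2 - a ^ 2)) := by
  have hdiff : (norm ⁻¹' Icc a b : Set (EuclideanSpace ℝ (Fin 2)))
      = Metric.closedBall 0 b \ Metric.ball 0 a := by
    ext ξ; simp [and_comm]
  rw [hdiff, measure_sdiff
    (Metric.ball_subset_closedBall.trans (Metric.closedBall_subset_closedBall hab))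
    measurableSet_ball.nullMeasurableSet measure_ball_lt_top.ne]
  simp only [EuclideanSpace.volume_closedBall_fin_two, EuclideanSpace.volume_ball_fin_two]
  rw [← ENNReal.ofReal_pow (ha.trans hab), ← ENNReal.ofReal_pow ha,
    ← ENNReal.ofReal_mul (by positivity), ← ENNReal.ofReal_mul (by positivity),
    ← ENNReal.ofReal_sub _ (by positivity)]
  apply le_of_eq; congr 1; ring

theorem setLIntegral_annulus_comp_apply_one_le {a b : ℝ} (ha : 0 ≤ a) (hab : a ≤ b) (hb : 0 < b)
    {g : ℝ → ℝ≥0∞} (hg : Measurable g) {c : ℝ≥0∞} (hc : ∀ y, b / 2 < |y| → g y ≤ c) :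
    ∫⁻ ξ in (norm ⁻¹' Icc a b : Set (EuclideanSpace ℝ (Fin 2))), g (ξ 1)
      ≤ ENNReal.ofReal (4 * (b ^ 2 - a ^ 2) / b) * (∫⁻ y, g y)
        + c * ENNReal.ofReal (π * (b ^ 2 - a ^ 2)) := by
  set A : Set (EuclideanSpace ℝ (Fin 2)) := norm ⁻¹' Icc a b
  set B : Set (EuclideanSpace ℝ (Fin 2)) := {ξ | |ξ 1| ≤ b / 2}
  set S : Set (ℝ × ℝ) := {p | a ^ 2 ≤ p.1 ^ 2 + p.2 ^ 2 ∧ p.1 ^ 2 + p.2 ^ 2 ≤ b ^ 2 ∧ |p.2| ≤ b / 2}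
  let e : EuclideanSpace ℝ (Fin 2) ≃ᵐ ℝ × ℝ :=
    (MeasurableEquiv.toLp 2 (Fin 2 → ℝ)).symm.trans MeasurableEquiv.finTwoArrow
  have he_apply (ξ : EuclideanSpace ℝ (Fin 2)) : e ξ = (ξ 0, ξ 1) := rfl
  have he : MeasurePreserving e :=
    (volume_preserving_finTwoArrow ℝ).comp
      (EuclideanSpace.volume_preserving_symm_measurableEquiv_toLp _)
  have hAB : A ∩ B ⊆ e ⁻¹' S := by
    rintro ξ ⟨⟨haξ, hξb⟩, hξ⟩
    have hnorm : ‖ξ‖ ^ 2 = ξ 0 ^ 2 + ξ 1 ^ 2 := by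
      rw [EuclideanSpace.real_norm_sq_eq, Fin.sum_univ_two]
    simp only [mem_preimage, he_apply, S, mem_ofPred_eq, ← hnorm]
    exact ⟨by gcongr, by gcongr, hξ⟩
  have hS : MeasurableSet S := by measurability
  have hslice : ∀ y, volume {x | (x, y) ∈ S} ≤ ENNReal.ofReal (4 * (b ^ 2 - a ^ 2) / b) := by
    intro y
    by_cases hy : |y| ≤ b / 2
    · refine (measure_mono fun x hx => ?_).trans (volume_annulus_slice_le ha hab hb hy)
      exact ⟨hx.1, hx.2.1⟩
    · simp [S, hy]
  have hinner : ∫⁻ ξ in A ∩ B, g (ξ 1) ≤ ENNReal.ofReal (4 * (b ^ 2 - a ^ 2) / b) * ∫⁻ y, g y :=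
    calc ∫⁻ ξ in A ∩ B, g (ξ 1) ≤ ∫⁻ ξ in e ⁻¹' S, g (e ξ).2 := lintegral_mono_set hAB
      _ = ∫⁻ p in S, g p.2 :=
        he.setLIntegral_comp_preimage_emb e.measurableEmbedding (fun p => g p.2) S
      _ ≤ _ := setLIntegral_comp_snd_le_of_measure_slice_le hS hg hslice
  have houter : ∫⁻ ξ in A ∩ Bᶜ, g (ξ 1) ≤ c * ENNReal.ofReal (π * (b ^ 2 - a ^ 2)) :=
    calc ∫⁻ ξ in A ∩ Bᶜ, g (ξ 1) ≤ ∫⁻ ξ in A ∩ Bᶜ, c :=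
          setLIntegral_mono measurable_const fun ξ hξ => hc _ (not_le.1 hξ.2)
      _ ≤ c * volume A := by rw [setLIntegral_const]; gcongr; exact inter_subset_left
      _ ≤ _ := by gcongr; exact volume_annulus_le ha hab
  calc ∫⁻ ξ in A, g (ξ 1) = ∫⁻ ξ in A ∩ B ∪ A ∩ Bᶜ, g (ξ 1) := by rw [inter_union_compl]
    _ ≤ _ := (lintegral_union_le _ _ _).trans (add_le_add hinner houter)

theorem integrable_one_add_sq_rpow_neg {l : ℝ} (hl : 1 / 2 < l) :
    Integrable fun y : ℝ => (1 + y ^ 2) ^ (-l) := by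
  have h := integrable_rpow_neg_one_add_norm_sq (E := ℝ) (μ := volume) (r := 2 * l)
    (by rw [Module.finrank_self, Nat.cast_one]; linarith)
  simpa [neg_div, mul_div_cancel_left₀ l two_ne_zero] using h

theorem mul_one_add_half_sq_rpow_neg_le {l b : ℝ} (hl : 1 / 2 ≤ l) (hb : 0 ≤ b) :
    b * (1 + (b / 2) ^ 2) ^ (-l) ≤ 2 := by
  have hbase : 1 ≤ 1 + (b / 2) ^ 2 := by nlinarith
  have hroot : b / 2 ≤ √(1 + (b / 2) ^ 2) := Real.le_sqrt_of_sq_le (by linarith)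
  calc b * (1 + (b / 2) ^ 2) ^ (-l) ≤ b * (1 + (b / 2) ^ 2) ^ (-(1 / 2) : ℝ) := by
        gcongr
    _ = b / √(1 + (b / 2) ^ 2) := by
        rw [Real.rpow_neg (by positivity), ← Real.sqrt_eq_rpow, ← div_eq_mul_inv]
    _ ≤ 2 := by rw [div_le_iff₀ (by positivity)]; linarith

theorem setLIntegral_annulus_one_add_norm_sub_sq_rpow_neg_le {l a b : ℝ} (hl : 1 / 2 < l)
    (ha : 0 ≤ a) (hab : a ≤ b) (hb : 0 < b) (x : EuclideanSpace ℝ (Fin 2)) :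
    ∫⁻ ξ in norm ⁻¹' Icc a b, ENNReal.ofReal ((1 + ‖x - ξ‖ ^ 2) ^ (-l))
      ≤ ENNReal.ofReal ((4 * (∫ y, (1 + y ^ 2) ^ (-l)) + 2 * π) * ((b ^ 2 - a ^ 2) / b)) := by
  set w : EuclideanSpace ℝ (Fin 2) := EuclideanSpace.single 0 ‖x‖
  have hw : ‖x‖ = ‖w‖ := by simp [w]
  have hweight : ∀ ξ : EuclideanSpace ℝ (Fin 2),
      (1 + ‖w - ξ‖ ^ 2) ^ (-l) ≤ (1 + ξ 1 ^ 2) ^ (-l) := by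
    intro ξ
    have h1 : |ξ 1| ≤ ‖w - ξ‖ := by
      simpa [w] using PiLp.norm_apply_le (w - ξ) 1
    have h2 : ξ 1 ^ 2 ≤ ‖w - ξ‖ ^ 2 := sq_le_sq.2 (h1.trans (le_abs_self _))
    exact Real.rpow_le_rpow_of_nonpos (by positivity) (by linarith) (by linarith)
  have hc : ∀ y : ℝ, b / 2 < |y| →
      ENNReal.ofReal ((1 + y ^ 2) ^ (-l)) ≤ ENNReal.ofReal ((1 + (b / 2) ^ 2) ^ (-l)) := by
    intro y hy
    have h2 : (b / 2) ^ 2 ≤ y ^ 2 := sq_le_sq.2 (by rw [abs_of_pos (half_pos hb)]; exact hy.le)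
    exact ENNReal.ofReal_le_ofReal
      (Real.rpow_le_rpow_of_nonpos (by positivity) (by linarith) (by linarith))
  have hK := integrable_one_add_sq_rpow_neg hl
  rw [setLIntegral_norm_sub_eq_of_norm_eq _ (fun r => ENNReal.ofReal ((1 + r ^ 2) ^ (-l))) hw]
  calc ∫⁻ ξ in norm ⁻¹' Icc a b, ENNReal.ofReal ((1 + ‖w - ξ‖ ^ 2) ^ (-l))
      ≤ ∫⁻ ξ in norm ⁻¹' Icc a b, ENNReal.ofReal ((1 + ξ 1 ^ 2) ^ (-l)) :=
        lintegral_mono fun ξ => ENNReal.ofReal_le_ofReal (hweight ξ)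
    _ ≤ ENNReal.ofReal (4 * (b ^ 2 - a ^ 2) / b) * ENNReal.ofReal (∫ y, (1 + y ^ 2) ^ (-l))
        + ENNReal.ofReal ((1 + (b / 2) ^ 2) ^ (-l)) * ENNReal.ofReal (π * (b ^ 2 - a ^ 2)) := by
        rw [ofReal_integral_eq_lintegral_ofReal hK (ae_of_all _ fun y => by positivity)]
        exact setLIntegral_annulus_comp_apply_one_le ha hab hb (by fun_prop) hc
    _ ≤ _ := by
        set K := ∫ y : ℝ, (1 + y ^ 2) ^ (-l)
        set c := (1 + (b / 2) ^ 2) ^ (-l)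
        have hsq : 0 ≤ b ^ 2 - a ^ 2 := by nlinarith
        have hK0 : 0 ≤ K := integral_nonneg fun y => by positivity
        rw [← ENNReal.ofReal_mul (by positivity), ← ENNReal.ofReal_mul (by positivity),
          ← ENNReal.ofReal_add (by positivity) (by positivity)]
        refine ENNReal.ofReal_le_ofReal ?_
        calc 4 * (b ^ 2 - a ^ 2) / b * K + c * (π * (b ^ 2 - a ^ 2))
            = (b ^ 2 - a ^ 2) / b * (4 * K) + π * ((b ^ 2 - a ^ 2) / b) * (b * c) := by
              field_simp
          _ ≤ (b ^ 2 - a ^ 2) / b * (4 * K) + π * ((b ^ 2 - a ^ 2) / b) * 2 := by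
              gcongr; exact mul_one_add_half_sq_rpow_neg_le hl.le hb.le
          _ = _ := by ring

/-- For every l > 1/2 there is a constant C such that uniformly in T ∈ ℕ and x ∈ ℝ²,
∫_{||ξ|−T|≤1} ⟨x−ξ⟩^{−2l} dξ ≤ C. -/
theorem annulus_convolution_bound_2d :
    ∀ l : ℝ, 1 / 2 < l → ∃ C : ℝ, ∀ (T : ℕ) (x : EuclideanSpace ℝ (Fin 2)),
      (∫ ξ in {ξ : EuclideanSpace ℝ (Fin 2) | |‖ξ‖ - (T : ℝ)| ≤ 1},
        (1 + ‖x - ξ‖ ^ 2) ^ (-l)) ≤ C := by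
  intro l hl
  set K := ∫ y : ℝ, (1 + y ^ 2) ^ (-l)
  have hK : 0 ≤ K := integral_nonneg fun y => by positivity
  refine ⟨(4 * K + 2 * π) * 4, fun T x => ?_⟩
  set a := max ((T : ℝ) - 1) 0
  set b := (T : ℝ) + 1
  have hsub : {ξ : EuclideanSpace ℝ (Fin 2) | |‖ξ‖ - (T : ℝ)| ≤ 1} ⊆ norm ⁻¹' Icc a b := by
    intro ξ (hξ : |‖ξ‖ - (T : ℝ)| ≤ 1)
    obtain ⟨h₁, h₂⟩ := abs_le.1 hξ
    exact ⟨max_le (by linarith) (norm_nonneg ξ), by linarith⟩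
  have hratio : (b ^ 2 - a ^ 2) / b ≤ 4 := by
    rw [div_le_iff₀ (by positivity)]
    rcases le_total (T : ℝ) 1 with hT | hT
    · simp only [a, max_eq_right (by linarith : (T : ℝ) - 1 ≤ 0)]; nlinarith
    · simp only [a, max_eq_left (by linarith : 0 ≤ (T : ℝ) - 1)]; nlinarith
  rw [integral_eq_lintegral_of_nonneg_ae (ae_of_all _ fun ξ => by positivity)
    (Measurable.aestronglyMeasurable (by fun_prop))]
  refine ENNReal.toReal_le_of_le_ofReal (by positivity) ?_
  calc _ ≤ ∫⁻ ξ in norm ⁻¹' Icc a b, ENNReal.ofReal ((1 + ‖x - ξ‖ ^ 2) ^ (-l)) :=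
        lintegral_mono_set hsub
    _ ≤ _ := setLIntegral_annulus_one_add_norm_sub_sq_rpow_neg_le hl (le_max_right _ _)
        (max_le (by linarith) (by positivity)) (by positivity) x
    _ ≤ _ := by gcongr
end
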